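/- Let E_ω, B_ω satisfy the stationary variational equations ∫E_ω·e dx = ω·∫x∧(e∧B_ω)dx = 0 and ∫B_ω·b dx − ω·∫x∧(E_ω∧b)dx = 0 for all admissible divergence-free perturbations e, b, and suppose Iω = M − ∫x∧(E_ω∧B_ω)dx. Then the increment of the reduced energy H_M(E,B) = (1/(2I))(M − ∫x∧(E∧B)dx)² + (1/2)∫(|E|²+|B|²)dx satisfies H_M(E_ω+e, B_ω+b) − H_M(E_ω, B_ω) = (1/(2I)) m² − ω·m₃ + (1/2)∫(|e|²+|b|²)dx, where m = m₁+m₂+m₃ with m₁ = ∫x∧(E_ω∧b)dx, m₂ = ∫x∧(e∧B_ω)dx, m₃ = ∫x∧(e∧b)dx. -/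

import Mathlib

open MeasureTheory Matrix

/-- Field momentum integral `∫ x ∧ (F(x) ∧ G(x)) dx`. -/
noncomputable def mom3 (F G : (Fin 3 → ℝ) → (Fin 3 → ℝ)) : Fin 3 → ℝ :=
  ∫ x : Fin 3 → ℝ, crossProduct x (crossProduct (F x) (G x))

/-- Squared Euclidean length. -/
def esq (v : Fin 3 → ℝ) : ℝ := ∑ i, v i ^ 2

/-- Reduced energy on the surface of constant angular momentum `M`. -/
noncomputable def HM (I : ℝ) (M : Fin 3 → ℝ) (E B : (Fin 3 → ℝ) → (Fin 3 → ℝ)) : ℝ :=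
  (1 / (2 * I)) * esq (M - mom3 E B) +
    (1 / 2) * ∫ x : Fin 3 → ℝ, (esq (E x) + esq (B x))

/-!
The field momentum is bilinear, so it changes by `m = m₁ + m₂ + m₃`, and by `Iω = M - ∫x∧(E_ω∧B_ω)`
the angular part of `H_M` changes by `(|Iω - m|² - |Iω|²)/(2I) = m²/(2I) - ω·m`. The field energy
changes by `∫(E_ω·e + B_ω·b) + ½∫(|e|² + |b|²)`. The variational equations give `∫E_ω·e = 0`,
`ω·m₂ = 0` and `∫B_ω·b = ω·m₁`, so of the linear terms only `-ω·m₃` survives.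
-/

theorem integrable_dotProduct_of_memLp {α ι : Type*} [MeasurableSpace α] {μ : Measure α}
    [Fintype ι] {f g : α → ι → ℝ} (hf : MemLp f 2 μ) (hg : MemLp g 2 μ) :
    Integrable (fun x => f x ⬝ᵥ g x) μ :=
  integrable_finsetSum _ fun i _ => (hf.eval i).integrable_mul (hg.eval i)

theorem esq_eq_dotProduct (v : Fin 3 → ℝ) : esq v = v ⬝ᵥ v := by
  simp only [esq, dotProduct, sq]

theorem esq_add (u v : Fin 3 → ℝ) : esq (u + v) = esq u + 2 * (u ⬝ᵥ v) + esq v := by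
  simp only [esq_eq_dotProduct, add_dotProduct, dotProduct_add, dotProduct_comm v u]
  ring

theorem esq_sub (u v : Fin 3 → ℝ) : esq (u - v) = esq u - 2 * (u ⬝ᵥ v) + esq v := by
  simp only [esq_eq_dotProduct, sub_dotProduct, dotProduct_sub, dotProduct_comm v u]
  ring

theorem esq_smul_sub_sub_esq_smul {I : ℝ} (hI : I ≠ 0) (ω m : Fin 3 → ℝ) :
    1 / (2 * I) * esq (I • ω - m) - 1 / (2 * I) * esq (I • ω) =
      1 / (2 * I) * esq m - ω ⬝ᵥ m := by
  rw [esq_sub, smul_dotProduct, smul_eq_mul]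
  field_simp
  ring

section Integrals

variable {α : Type*} [MeasurableSpace α] {μ : Measure α} {f g : α → Fin 3 → ℝ}

theorem integrable_esq_of_memLp (hf : MemLp f 2 μ) : Integrable (fun x => esq (f x)) μ := by
  simpa only [esq_eq_dotProduct] using integrable_dotProduct_of_memLp hf hf

theorem integral_esq_add_esq (hf : MemLp f 2 μ) (hg : MemLp g 2 μ) :
    ∫ x, (esq (f x) + esq (g x)) ∂μ = ∫ x, esq (f x) ∂μ + ∫ x, esq (g x) ∂μ :=
  integral_add (integrable_esq_of_memLp hf) (integrable_esq_of_memLp hg)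

theorem integral_esq_add (hf : MemLp f 2 μ) (hg : MemLp g 2 μ) :
    ∫ x, esq (f x + g x) ∂μ =
      ∫ x, esq (f x) ∂μ + 2 * ∫ x, f x ⬝ᵥ g x ∂μ + ∫ x, esq (g x) ∂μ := by
  simp only [esq_add]
  have hfg := (integrable_dotProduct_of_memLp hf hg).const_mul 2
  rw [integral_add ((integrable_esq_of_memLp hf).fun_add hfg) (integrable_esq_of_memLp hg),
    integral_add (integrable_esq_of_memLp hf) hfg, integral_const_mul]

end Integrals

theorem mom3_add_add {E B e b : (Fin 3 → ℝ) → (Fin 3 → ℝ)}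
    (hEB : Integrable (fun x => crossProduct x (crossProduct (E x) (B x))))
    (hEb : Integrable (fun x => crossProduct x (crossProduct (E x) (b x))))
    (heB : Integrable (fun x => crossProduct x (crossProduct (e x) (B x))))
    (heb : Integrable (fun x => crossProduct x (crossProduct (e x) (b x)))) :
    mom3 (E + e) (B + b) = mom3 E B + (mom3 E b + mom3 e B + mom3 e b) := by
  simp only [mom3, Pi.add_apply, map_add, LinearMap.add_apply]
  rw [integral_add (hEB.fun_add heB) (hEb.fun_add heb), integral_add hEB heB, integral_add hEb heb]
  abel

/-- Expansion of the reduced-energy increment at the soliton: using the two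
stationary variational equations, all terms linear in `(e, b)` cancel and
`H_M(E_ω+e,B_ω+b) − H_M(E_ω,B_ω) = m²/(2I) − ω·m₃ + (1/2)∫(|e|²+|b|²)dx`. -/
theorem stmt15 (I : ℝ) (hI : 0 < I) (M ω : Fin 3 → ℝ)
    (Eω Bω e b : (Fin 3 → ℝ) → (Fin 3 → ℝ))
    (hEω : MemLp Eω 2 (volume : Measure (Fin 3 → ℝ)))
    (hBω : MemLp Bω 2 (volume : Measure (Fin 3 → ℝ)))
    (he : MemLp e 2 (volume : Measure (Fin 3 → ℝ)))
    (hb : MemLp b 2 (volume : Measure (Fin 3 → ℝ)))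
    (hiEB : Integrable (fun x => crossProduct x (crossProduct (Eω x) (Bω x))))
    (hi1 : Integrable (fun x => crossProduct x (crossProduct (Eω x) (b x))))
    (hi2 : Integrable (fun x => crossProduct x (crossProduct (e x) (Bω x))))
    (hi3 : Integrable (fun x => crossProduct x (crossProduct (e x) (b x))))
    (hvar1 : ∫ x : Fin 3 → ℝ, (Eω x) ⬝ᵥ (e x) = 0)
    (hvar1' : ω ⬝ᵥ mom3 e Bω = 0)
    (hvar2 : (∫ x : Fin 3 → ℝ, (Bω x) ⬝ᵥ (b x)) - ω ⬝ᵥ mom3 Eω b = 0)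
    (hsol : I • ω = M - mom3 Eω Bω) :
    HM I M (Eω + e) (Bω + b) - HM I M Eω Bω =
      (1 / (2 * I)) * esq (mom3 Eω b + mom3 e Bω + mom3 e b) -
        ω ⬝ᵥ mom3 e b +
        (1 / 2) * ∫ x : Fin 3 → ℝ, (esq (e x) + esq (b x)) := by
  have angular := esq_smul_sub_sub_esq_smul hI.ne' ω (mom3 Eω b + mom3 e Bω + mom3 e b)
  rw [dotProduct_add, dotProduct_add, hvar1'] at angular
  unfold HM
  rw [mom3_add_add hiEB hi1 hi2 hi3, sub_add_eq_sub_sub M (mom3 Eω Bω), ← hsol,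
    integral_esq_add_esq (hEω.add he) (hBω.add hb)]
  simp only [Pi.add_apply]
  rw [integral_esq_add hEω he, integral_esq_add hBω hb, integral_esq_add_esq hEω hBω,
    integral_esq_add_esq he hb, hvar1]
  linear_combination angular + hvar2
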